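/- arXiv:1708.05760 — 2 statements merged into one kernel-verified Lean document; each statement's English description precedes it below -/
import Mathlib

section
/- Let A be an associative unital F-algebra, p ∈ F^× with p^r ≠ 1 for 1 ≤ r ≤ t+s, and M ∈ A, c ∈ ℤ. Then (M ; c choose t)_p · (M ; c−t choose s)_p = binom(t+s, t)_p · (M ; c choose t+s)_p, where binom(t+s,t)_p ∈ F is the Gaussian binomial coefficient. -/
/-- The `p`-binomial coefficient `(M ; c choose n)_p := ∏_{r=1}^n (p^{c+1-r} M − 1)/(p^r − 1)`
in an `F`-algebra `A`, for a unit `p` of the field `F`. -/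
noncomputable def pbinom {F A : Type*} [Field F] [Ring A] [Algebra F A]
    (p : Fˣ) (M : A) (c : ℤ) : ℕ → A
  | 0 => 1
  | n + 1 =>
      pbinom p M c n *
        (((p : F) ^ (n + 1) - 1)⁻¹ • (((p ^ (c - (n : ℤ)) : Fˣ) : F) • M - 1))

/-- The one-sided `p`-integer `(s)_p = 1 + p + ⋯ + p^{s-1}`. -/
def qInt {F : Type*} [Field F] (p : F) (s : ℕ) : F := ∑ t ∈ Finset.range s, p ^ t

/-- The one-sided `p`-factorial `(m)_p! = ∏_{s=1}^m (s)_p`. -/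
def qFac {F : Type*} [Field F] (p : F) (m : ℕ) : F := ∏ s ∈ Finset.range m, qInt p (s + 1)

/-- The scalar Gaussian binomial coefficient `binom(a,b)_p = (a)_p!/((b)_p!(a-b)_p!)` in `F`. -/
noncomputable def gbinomF {F : Type*} [Field F] (p : F) (a b : ℕ) : F :=
  qFac p a / (qFac p b * qFac p (a - b))

/-!
Clearing denominators, `(M ; c choose n)_p` is `(∏_{r ≤ n} (p^r − 1))⁻¹` times the product
`∏_{k < n} (p^{c-k} M − 1)`, and these numerator products concatenate:
the first `t` factors at `c` followed by the first `s` at `c − t` are the first `t + s` at `c`.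
The theorem is thus the scalar identity
`∏_{r ≤ t+s} (p^r − 1) = binom(t+s,t)_p ∏_{r ≤ t} (p^r − 1) ∏_{r ≤ s} (p^r − 1)`,
which follows from `p^r − 1 = (r)_p (p − 1)`.
-/

open Finset

section Scalar

variable {F : Type*} [Field F]

theorem prod_range_pow_succ_sub_one (q : F) (n : ℕ) :
    ∏ k ∈ range n, (q ^ (k + 1) - 1) = qFac q n * (q - 1) ^ n := by
  calc ∏ k ∈ range n, (q ^ (k + 1) - 1)
      = ∏ k ∈ range n, qInt q (k + 1) * (q - 1) :=
        prod_congr rfl fun k _ => (geom_sum_mul q (k + 1)).symm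
    _ = qFac q n * (q - 1) ^ n := by rw [← prod_mul_pow_card, card_range, qFac]

theorem prod_range_pow_succ_sub_one_ne_zero {q : F} {n : ℕ}
    (hq : ∀ r : ℕ, 1 ≤ r → r ≤ n → q ^ r ≠ 1) :
    ∏ k ∈ range n, (q ^ (k + 1) - 1) ≠ 0 :=
  prod_ne_zero_iff.mpr fun k hk =>
    sub_ne_zero.mpr (hq (k + 1) k.succ_pos (mem_range.mp hk))

theorem gbinomF_add_eq_div_prod {q : F} {b c : ℕ}
    (hq : ∀ r : ℕ, 1 ≤ r → r ≤ b + c → q ^ r ≠ 1) :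
    gbinomF q (b + c) b = (∏ k ∈ range (b + c), (q ^ (k + 1) - 1)) /
      ((∏ k ∈ range b, (q ^ (k + 1) - 1)) * ∏ k ∈ range c, (q ^ (k + 1) - 1)) := by
  have hb := prod_range_pow_succ_sub_one_ne_zero fun r h1 h2 =>
    hq r h1 (h2.trans (b.le_add_right c))
  have hc := prod_range_pow_succ_sub_one_ne_zero fun r h1 h2 =>
    hq r h1 (h2.trans (c.le_add_left b))
  simp only [prod_range_pow_succ_sub_one, mul_ne_zero_iff] at hb hc ⊢
  obtain ⟨hb₁, hb₂⟩ := hb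
  obtain ⟨hc₁, hc₂⟩ := hc
  rw [gbinomF, Nat.add_sub_cancel_left, pow_add]
  field_simp

end Scalar

section Algebra

variable {F A : Type*} [Field F] [Ring A] [Algebra F A]

noncomputable def pbinomNum (p : Fˣ) (M : A) (c : ℤ) : ℕ → A
  | 0 => 1
  | n + 1 => pbinomNum p M c n * (((p ^ (c - (n : ℤ)) : Fˣ) : F) • M - 1)

theorem pbinomNum_add (p : Fˣ) (M : A) (c : ℤ) (t s : ℕ) :
    pbinomNum p M c (t + s) = pbinomNum p M c t * pbinomNum p M (c - t) s := by
  induction s with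
  | zero => simp [pbinomNum]
  | succ s ih =>
    have hexp : c - ((t + s : ℕ) : ℤ) = c - t - s := by push_cast; ring
    rw [← add_assoc, pbinomNum, hexp, ih, mul_assoc, pbinomNum]

theorem pbinom_eq_smul_pbinomNum (p : Fˣ) (M : A) (c : ℤ) (n : ℕ) :
    pbinom p M c n = (∏ k ∈ range n, ((p : F) ^ (k + 1) - 1))⁻¹ • pbinomNum p M c n := by
  induction n with
  | zero => simp [pbinom, pbinomNum]
  | succ n ih =>
    rw [pbinom, ih, prod_range_succ, mul_inv, smul_mul_smul_comm, pbinomNum]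

end Algebra

/-- `(M ; c choose t)_p (M ; c−t choose s)_p = binom(t+s, t)_p (M ; c choose t+s)_p`. -/
theorem pbinom_mul_pbinom {F A : Type*} [Field F] [Ring A] [Algebra F A]
    (p : Fˣ) (t s : ℕ) (hp : ∀ r : ℕ, 1 ≤ r → r ≤ t + s → (p : F) ^ r ≠ 1)
    (M : A) (c : ℤ) :
    pbinom p M c t * pbinom p M (c - (t : ℤ)) s =
      gbinomF (p : F) (t + s) t • pbinom p M c (t + s) := by
  have hts := prod_range_pow_succ_sub_one_ne_zero hp
  have ht := prod_range_pow_succ_sub_one_ne_zero fun r h1 h2 =>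
    hp r h1 (h2.trans (t.le_add_right s))
  have hs := prod_range_pow_succ_sub_one_ne_zero fun r h1 h2 =>
    hp r h1 (h2.trans (s.le_add_left t))
  rw [pbinom_eq_smul_pbinomNum, pbinom_eq_smul_pbinomNum, pbinom_eq_smul_pbinomNum,
    smul_mul_smul_comm, ← pbinomNum_add, smul_smul, gbinomF_add_eq_div_prod hp]
  congr 1
  field_simp
end

section
/- Let H be a Hopf algebra over a field F with antipode S, let M ∈ H be an invertible group-like element, and let p ∈ F^× satisfy p^r ≠ 1 for 1 ≤ r ≤ t. Then S((M ; c choose t)_p) = (−1)^t p^{ct − binom(t,2)} M^{−t} (M ; t−c−1 choose t)_p, for every c ∈ ℤ. -/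
/-!
The antipode is an algebra map `H → Hᵐᵒᵖ`, and the factors of a `p`-binomial coefficient commute,
so `S((M ; c choose t)_p) = (M⁻¹ ; c choose t)_p` for group-like `M`, since `S(M) = M⁻¹`. The
identity expressing `(u⁻¹ ; c choose t)_p` through `(u ; t-c-1 choose t)_p` involves only `u` and
`u⁻¹`, so it suffices to check it for `u = T` in the commutative ring of Laurent polynomials
(which maps to any algebra by `T ↦ u`), where it follows by induction on `t` from `p^{c-t} u⁻¹ - 1 = -p^{c-t} u⁻¹ (p^{t-c} u - 1)`.
-/

open TensorProduct

open Polynomial LaurentPolynomial MulOpposite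

section Ring

variable {F A B : Type*} [Field F] [Ring A] [Ring B] [Algebra F A] [Algebra F B] (p : Fˣ)

theorem AlgHom.map_pbinom (f : A →ₐ[F] B) (x : A) (c : ℤ) (t : ℕ) :
    f (pbinom p x c t) = pbinom p (f x) c t := by
  induction t with
  | zero => simp [pbinom]
  | succ n ih => simp [pbinom, ih]

theorem pbinom_op (x : A) (c : ℤ) (t : ℕ) : pbinom p (op x) c t = op (pbinom p x c t) := by
  rw [← aeval_X (R := F) (op x), ← (aeval (op x)).map_pbinom, aeval_op_apply,
    (aeval x).map_pbinom, aeval_X]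

end Ring

section CommRing

variable {F A : Type*} [Field F] [CommRing A] [Algebra F A] (p : Fˣ)

theorem pbinom_succ_eq_mul_pbinom_sub_one (x : A) (c : ℤ) (t : ℕ) :
    pbinom p x c (t + 1) =
      (((p : F) ^ (t + 1) - 1)⁻¹ • (((p ^ c : Fˣ) : F) • x - 1)) * pbinom p x (c - 1) t := by
  induction t with
  | zero => simp [pbinom]
  | succ n ih =>
    rw [pbinom, ih, pbinom, show c - 1 - (n : ℤ) = c - ((n + 1 : ℕ) : ℤ) by push_cast; ring]
    simp only [Algebra.smul_def]
    ring

theorem pbinom_units_inv_of_commRing (u : Aˣ) (c : ℤ) (t : ℕ) :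
    pbinom p (↑u⁻¹ : A) c t =
      ((-1 : F) ^ t * ((p ^ (c * (t : ℤ) - (t.choose 2 : ℤ)) : Fˣ) : F)) •
        ((↑u⁻¹ : A) ^ t * pbinom p (u : A) ((t : ℤ) - c - 1) t) := by
  induction t with
  | zero => simp [pbinom]
  | succ n ih =>
    have hexp : c * ((n + 1 : ℕ) : ℤ) - ((n + 1).choose 2 : ℕ) =
        c * n - (n.choose 2 : ℕ) + (c - n) := by
      rw [Nat.choose_succ_succ', Nat.choose_one_right]; push_cast; ring
    have hq : ((p ^ (c - n) : Fˣ) : F) * ((p ^ ((n : ℤ) - c) : Fˣ) : F) = 1 := by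
      rw [← Units.val_mul, ← zpow_add]; simp
    have hunit : algebraMap F A ((p ^ (c - n) : Fˣ) : F) *
        algebraMap F A ((p ^ ((n : ℤ) - c) : Fˣ) : F) * ((↑u⁻¹ : A) * u) = 1 := by
      rw [← map_mul, hq, map_one, one_mul, Units.inv_mul]
    rw [pbinom, ih, show ((n + 1 : ℕ) : ℤ) - c - 1 = n - c by push_cast; ring,
      pbinom_succ_eq_mul_pbinom_sub_one, hexp, zpow_add, Units.val_mul]
    simp only [Algebra.smul_def, map_mul, map_pow, map_neg, map_one]
    linear_combination ((-1) ^ n * algebraMap F A ((p ^ (c * n - (n.choose 2 : ℕ) : ℤ) : Fˣ) : F) *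
      algebraMap F A ((p : F) ^ (n + 1) - 1)⁻¹ * (↑u⁻¹ : A) ^ n *
      pbinom p (u : A) (n - c - 1) n) * hunit

end CommRing

theorem pbinom_units_inv {F A : Type*} [Field F] [Ring A] [Algebra F A] (p : Fˣ) (u : Aˣ)
    (c : ℤ) (t : ℕ) :
    pbinom p (↑u⁻¹ : A) c t =
      ((-1 : F) ^ t * ((p ^ (c * (t : ℤ) - (t.choose 2 : ℤ)) : Fˣ) : F)) •
        ((↑u⁻¹ : A) ^ t * pbinom p (u : A) ((t : ℤ) - c - 1) t) := by
  let ev : F[T;T⁻¹] →ₐ[F] A :=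
    AddMonoidAlgebra.lift F A ℤ ((Units.coeHom A).comp (zpowersHom Aˣ u))
  let w : F[T;T⁻¹]ˣ := (isUnit_T 1).unit
  have hw : Units.map (ev : F[T;T⁻¹] →* A) w = u := by
    ext
    simp [ev, w, T, -single_eq_C_mul_T]
  have := congrArg ev (pbinom_units_inv_of_commRing p w c t)
  simp only [ev.map_pbinom, map_smul, map_mul, map_pow] at this
  simpa [← hw] using this

theorem pbinom_antipode {F H : Type*} [Field F] [Ring H] [HopfAlgebra F H] (p : Fˣ) (x : H)
    (c : ℤ) (t : ℕ) :
    pbinom p (HopfAlgebra.antipode F x) c t = HopfAlgebra.antipode F (pbinom p x c t) := by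
  have := (HopfAlgebra.antipodeAlgHomOp F H).map_pbinom p x c t
  simp only [HopfAlgebra.antipodeAlgHomOp_apply, pbinom_op] at this
  exact (op_injective this).symm

theorem antipode_pbinom_general {F H : Type*} [Field F] [Ring H] [HopfAlgebra F H]
    (M : H) (hM : IsUnit M)
    (hΔ : Coalgebra.comul (R := F) M = M ⊗ₜ[F] M)
    (hε : Coalgebra.counit (R := F) M = 1)
    (p : Fˣ) (t : ℕ) (c : ℤ) :
    HopfAlgebra.antipode (R := F) (pbinom p M c t) =
      ((-1 : F) ^ t * ((p ^ (c * (t : ℤ) - (t.choose 2 : ℤ)) : Fˣ) : F)) •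
        ((((hM.unit⁻¹ : Hˣ) : H)) ^ t * pbinom p M ((t : ℤ) - c - 1) t) := by
  have hM' : IsGroupLikeElem F M := ⟨hε, hΔ⟩
  have hS : HopfAlgebra.antipode F M = ↑hM.unit⁻¹ :=
    Units.mul_eq_one_iff_eq_inv.mp (by rw [hM.unit_spec]; exact hM'.antipode_mul_cancel)
  rw [← pbinom_antipode, hS, pbinom_units_inv, hM.unit_spec]

/-- If `M` is an invertible group-like element of a Hopf algebra `H` over `F`, the antipode
satisfies `S((M ; c choose t)_p) = (−1)^t p^{ct − binom(t,2)} M^{−t} (M ; t−c−1 choose t)_p`. -/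
theorem antipode_pbinom {F H : Type*} [Field F] [Ring H] [HopfAlgebra F H]
    (M : H) (hM : IsUnit M)
    (hΔ : Coalgebra.comul (R := F) M = M ⊗ₜ[F] M)
    (hε : Coalgebra.counit (R := F) M = 1)
    (p : Fˣ) (t : ℕ) (hp : ∀ r : ℕ, 1 ≤ r → r ≤ t → (p : F) ^ r ≠ 1) (c : ℤ) :
    HopfAlgebra.antipode (R := F) (pbinom p M c t) =
      ((-1 : F) ^ t * ((p ^ (c * (t : ℤ) - (t.choose 2 : ℤ)) : Fˣ) : F)) •
        ((((hM.unit⁻¹ : Hˣ) : H)) ^ t * pbinom p M ((t : ℤ) - c - 1) t) :=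
  antipode_pbinom_general M hM hΔ hε p t c
end
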